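/- Let A = ⟨x, y⟩ with ⟨x⟩ normal in A, and suppose [x, y] = x^c. Then the derived subgroup A' equals ⟨x^c⟩. -/

import Mathlib

open scoped commutatorElement

/-!
`⟨x^c⟩` is normal, being generated by a power of the generator of the normal cyclic subgroup
`⟨x⟩`. Modulo `⟨x^c⟩` the generators `x` and `y` commute, so the quotient is abelian and
`A' ≤ ⟨x^c⟩`; conversely `x^c = [x, y]` lies in `A'`.
-/

namespace Subgroup

variable {G : Type*} [Group G]

theorem Normal.zpowers_zpow {x : G} (hx : (zpowers x).Normal) (n : ℤ) :
    (zpowers (x ^ n)).Normal := by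
  refine ⟨fun _ ⟨k, hk⟩ g => ?_⟩
  obtain ⟨m, hm⟩ := hx.conj_mem x (mem_zpowers x) g
  have hconj : g * x ^ n * g⁻¹ = (x ^ n) ^ m := by
    rw [← conj_zpow, ← hm, ← zpow_mul, ← zpow_mul, mul_comm]
  rw [← hk, ← conj_zpow, hconj]
  exact zpow_mem (zpow_mem (mem_zpowers _) m) k

theorem isMulCommutative_of_closure_eq_top {s : Set G} (hs : closure s = ⊤)
    (hcomm : ∀ x ∈ s, ∀ y ∈ s, x * y = y * x) : IsMulCommutative G :=
  have := isMulCommutative_closure hcomm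
  isMulCommutative_iff.mpr fun g h =>
    setLike_mul_comm (s := closure s) (hs ▸ mem_top g) (hs ▸ mem_top h)

theorem commutator_le_of_closure_pair_eq_top {a b : G} (hgen : closure {a, b} = ⊤)
    {N : Subgroup G} [N.Normal] (hN : ⁅a, b⁆ ∈ N) : _root_.commutator G ≤ N := by
  have hcomm : Commute (a : G ⧸ N) b := by
    rw [← commutatorElement_eq_one_iff_commute, ← QuotientGroup.coe_mk', ← map_commutatorElement]
    exact (QuotientGroup.eq_one_iff _).mpr hN
  rw [← Normal.quotient_commutative_iff_commutator_le]
  refine isMulCommutative_of_closure_eq_top (s := {(a : G ⧸ N), (b : G ⧸ N)}) ?_ ?_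
  · rw [← QuotientGroup.coe_mk', ← Set.image_pair, ← MonoidHom.map_closure, hgen,
      ← MonoidHom.range_eq_map, QuotientGroup.range_mk']
  · rintro _ (rfl | rfl) _ (rfl | rfl) <;> first | rfl | exact hcomm.eq | exact hcomm.eq.symm

end Subgroup

/-- Let `A = ⟨x, y⟩` with `⟨x⟩` normal in `A` and `[x,y] = x^c`.  Then `A' = ⟨x^c⟩`. -/
theorem stmt3 {A : Type*} [Group A] (x y : A)
    (hgen : Subgroup.closure {x, y} = ⊤)
    (hnorm : (Subgroup.zpowers x).Normal) (c : ℤ)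
    (hc : ⁅x, y⁆ = x ^ c) :
    commutator A = Subgroup.zpowers (x ^ c) := by
  have := hnorm.zpowers_zpow c
  refine le_antisymm (Subgroup.commutator_le_of_closure_pair_eq_top hgen ?_) ?_
  · exact hc ▸ Subgroup.mem_zpowers _
  · exact Subgroup.zpowers_le.mpr
      (hc ▸ Subgroup.commutator_mem_commutator (Subgroup.mem_top x) (Subgroup.mem_top y))
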